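/- arXiv:1011.2716 — 9 statements merged into one kernel-verified Lean document; each statement's English description precedes it below -/
import Mathlib

section
/- Define m : ℕ × ℕ → Multiset ℕ by m(x,y) = {x+y, max x y − min x y}. Then m is associative in the two-valued sense: for all x, y, z ∈ ℕ the 4-element multisets obtained as the union of m(x,w) over w ∈ m(y,z) and as the union of m(w,z) over w ∈ m(x,y) are equal. Moreover m(0,x) = {x,x} for all x, and 0 ∈ m(x,x) for all x. Hence (ℕ, m) is a two-valued group with unit 0 and inverse the identity map. -/
def mTwo : ℕ × ℕ → Multiset ℕ := fun p => {p.1 + p.2, max p.1 p.2 - min p.1 p.2}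

/-!
`mTwo` is the image of addition on `ℤ` under the quotient `ℤ → ℤ / ±1 ≅ ℕ`:
`mTwo (|a|, |b|) = {|a + b|, |a - b|}` for all integers `a, b`. Both bracketings of
`x * y * z` are therefore the images of the four integers `x ± y ± z`, so associativity
reduces to rearranging a multiset in an abelian group.
-/

theorem Multiset.bind_pair_add_sub_assoc {G : Type*} [AddCommGroup G] (x y z : G) :
    (({y + z, y - z} : Multiset G).bind fun w => {x + w, x - w}) =
      ({x + y, x - y} : Multiset G).bind fun u => {u + z, u - z} := by
  simp only [Multiset.insert_eq_cons, Multiset.cons_bind, Multiset.singleton_bind,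
    Multiset.singleton_add, Multiset.cons_add, ← add_assoc, sub_add_eq_sub_sub, ← add_sub_assoc,
    ← sub_add]
  rw [Multiset.cons_swap (x - y - z)]
  exact congrArg _ (congrArg _ (Multiset.pair_comm _ _))

theorem mTwo_natAbs (a b : ℤ) :
    mTwo (a.natAbs, b.natAbs) = ({a + b, a - b} : Multiset ℤ).map Int.natAbs := by
  -- when `a` and `b` have opposite signs, `|a + b|` and `|a - b|` come out swapped
  obtain ⟨p, rfl | rfl⟩ := Int.eq_nat_or_neg a <;> obtain ⟨q, rfl | rfl⟩ := Int.eq_nat_or_neg b <;>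
    simp only [mTwo, Multiset.insert_eq_cons, Multiset.map_cons, Multiset.map_singleton,
      Int.natAbs_neg, Int.natAbs_natCast] <;>
    first
      | (congr 2 <;> omega)
      | (rw [← Multiset.insert_eq_cons, Multiset.pair_comm]; congr 2 <;> omega)

theorem mTwo_eq_map_natAbs (x y : ℕ) :
    mTwo (x, y) = ({(x : ℤ) + y, (x : ℤ) - y} : Multiset ℤ).map Int.natAbs := by
  simpa using mTwo_natAbs x y

theorem mTwo_bind_left (x y z : ℕ) :
    (mTwo (y, z)).bind (fun w => mTwo (x, w)) =
      (({(y : ℤ) + z, (y : ℤ) - z} : Multiset ℤ).bind fun w => {(x : ℤ) + w, x - w}).map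
        Int.natAbs := by
  rw [mTwo_eq_map_natAbs, Multiset.bind_map, Multiset.map_bind]
  congr 1; funext w
  simpa using mTwo_natAbs x w

theorem mTwo_bind_right (x y z : ℕ) :
    (mTwo (x, y)).bind (fun w => mTwo (w, z)) =
      (({(x : ℤ) + y, (x : ℤ) - y} : Multiset ℤ).bind fun u => {u + z, u - z}).map
        Int.natAbs := by
  rw [mTwo_eq_map_natAbs, Multiset.bind_map, Multiset.map_bind]
  congr 1; funext u
  simpa using mTwo_natAbs u z

/-- `(ℕ, mTwo)` is a two-valued group with unit `0` and inverse the identity map: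
`mTwo` is associative in the two-valued sense, `0` is a unit, and `0 ∈ mTwo (x, x)`. -/
theorem mTwo_two_valued_group :
    (∀ x y z : ℕ,
      (mTwo (y, z)).bind (fun w => mTwo (x, w)) =
        (mTwo (x, y)).bind (fun w => mTwo (w, z))) ∧
    (∀ x : ℕ, mTwo (0, x) = {x, x}) ∧
    (∀ x : ℕ, 0 ∈ mTwo (x, x)) := by
  refine ⟨fun x y z => ?_, fun x => by simp [mTwo], fun x => by simp [mTwo]⟩
  rw [mTwo_bind_left, mTwo_bind_right, Multiset.bind_pair_add_sub_assoc]
end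

section
/- The two-valued group p₂ on ℂ is associative: for all x, y, z ∈ ℂ, the set {w ∈ ℂ : ∃ t, p₂(t,y,z) = 0 ∧ p₂(w,x,t) = 0} equals the set {w ∈ ℂ : ∃ t, p₂(t,x,y) = 0 ∧ p₂(w,t,z) = 0}, where p₂(z,x,y) = (x+y+z)² − 4(xy+yz+zx). -/
/-!
Writing `x = a²`, `y = b²`, `z = c²`, the polynomial factors as
`p₂(w, a², b²) = (w - (a + b)²) (w - (a - b)²)`, so the values of `x ∗₂ y` are the squares
`(a + b)²` over all choices of square roots. Iterating, both `x ∗₂ (y ∗₂ z)` and `(x ∗₂ y) ∗₂ z`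
are the sets of squares `(a + b + c)²` over all choices of square roots of `x`, `y`, `z`.
-/

/-- The polynomial whose roots in `z` give the two-valued group `p₂` on `ℂ`. -/
def pTwo (z x y : ℂ) : ℂ := (x + y + z)^2 - 4*(x*y + y*z + z*x)

lemma pTwo_comm (w x y : ℂ) : pTwo w x y = pTwo w y x := by
  unfold pTwo; ring

lemma pTwo_sq_sq_eq_zero_iff (w p q : ℂ) :
    pTwo w (p^2) (q^2) = 0 ↔ w = (p + q)^2 ∨ w = (p - q)^2 := by
  have h : pTwo w (p^2) (q^2) = (w - (p + q)^2) * (w - (p - q)^2) := by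
    unfold pTwo; ring
  rw [h, mul_eq_zero, sub_eq_zero, sub_eq_zero]

lemma pTwo_eq_zero_iff_exists_sq (w x y : ℂ) :
    pTwo w x y = 0 ↔ ∃ p q : ℂ, p^2 = x ∧ q^2 = y ∧ w = (p + q)^2 := by
  constructor
  · intro hw
    obtain ⟨p, rfl⟩ := IsAlgClosed.exists_pow_nat_eq x two_pos
    obtain ⟨q, rfl⟩ := IsAlgClosed.exists_pow_nat_eq y two_pos
    rcases (pTwo_sq_sq_eq_zero_iff w p q).mp hw with rfl | rfl
    · exact ⟨p, q, rfl, rfl, rfl⟩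
    · exact ⟨p, -q, rfl, neg_sq q, by ring⟩
  · rintro ⟨p, q, rfl, rfl, rfl⟩
    exact (pTwo_sq_sq_eq_zero_iff _ p q).mpr (Or.inl rfl)

lemma exists_pTwo_pTwo_eq_zero_iff (w x y z : ℂ) :
    (∃ t : ℂ, pTwo t y z = 0 ∧ pTwo w x t = 0) ↔
      ∃ a b c : ℂ, a^2 = x ∧ b^2 = y ∧ c^2 = z ∧ w = (a + b + c)^2 := by
  simp only [pTwo_eq_zero_iff_exists_sq]
  constructor
  · rintro ⟨_, ⟨b, c, rfl, rfl, rfl⟩, a, r, rfl, hr, rfl⟩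
    rcases sq_eq_sq_iff_eq_or_eq_neg.mp hr with rfl | rfl
    · exact ⟨a, b, c, rfl, rfl, rfl, by ring⟩
    · exact ⟨a, -b, -c, rfl, neg_sq b, neg_sq c, by ring⟩
  · rintro ⟨a, b, c, rfl, rfl, rfl, rfl⟩
    exact ⟨(b + c)^2, ⟨b, c, rfl, rfl, rfl⟩, a, b + c, rfl, rfl, by ring⟩

/-- The two-valued group `p₂` on `ℂ` is associative: the set of values of `x ∗₂ (y ∗₂ z)`
coincides with the set of values of `(x ∗₂ y) ∗₂ z`. -/
theorem pTwo_assoc (x y z : ℂ) :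
    {w : ℂ | ∃ t : ℂ, pTwo t y z = 0 ∧ pTwo w x t = 0} =
      {w : ℂ | ∃ t : ℂ, pTwo t x y = 0 ∧ pTwo w t z = 0} := by
  ext w
  simp only [Set.mem_ofPred_eq, pTwo_comm _ x y, pTwo_comm w _ z,
    exists_pTwo_pTwo_eq_zero_iff]
  constructor <;> rintro ⟨a, b, c, ha, hb, hc, rfl⟩ <;> exact ⟨c, b, a, hc, hb, ha, by ring⟩
end

section
/- Let g₂, g₃ ∈ ℂ and let s₁, t₁, s₂, t₂ ∈ ℂ satisfy t₁² = 4s₁³ − g₂s₁ − g₃, t₂² = 4s₂³ − g₂s₂ − g₃ and s₁ ≠ s₂. Define z₊ = −s₁ − s₂ + ((t₁−t₂)/(2(s₁−s₂)))² and z₋ = −s₁ − s₂ + ((t₁+t₂)/(2(s₁−s₂)))². Then: (i) 2(s₁−s₂)²·(z₊ + z₋) = 4s₁s₂(s₁+s₂) − g₂(s₁+s₂) − 2g₃, and (ii) (s₁−s₂)²·(z₊·z₋) = (s₁s₂ + g₂/4)² + g₃(s₁+s₂). Consequently the unordered pair {z₊, z₋} is determined algebraically (symmetrically) by (s₁, s₂)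 alone, which is the multiplication law of the two-valued coset group on the elliptic curve t² = 4s³ − g₂s − g₃ modulo the involution (s,t) ↦ (s,−t). -/
/-!
Write `z± = −(s₁ + s₂) + λ±²`, where `λ₊` is the slope of the chord through `(s₁, t₁)`, `(s₂, t₂)`
and `λ₋` that of the chord through `(s₁, t₁)` and the reflected point `(s₂, −t₂)`. By Vieta,
`z₊ + z₋` and `z₊ z₋` are polynomials in `s₁ + s₂`, `λ₊² + λ₋²` and `λ₊ λ₋`. The first of these
is `(t₁² + t₂²) / (2 (s₁ − s₂)²)`, and the curve equation turns `t₁² − t₂²` into `s₁ − s₂` times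
`4 (s₁² + s₁ s₂ + s₂²) − g₂`, so `λ₊ λ₋` has only a simple pole along `s₁ = s₂`. Substituting the
curve equation for `t₁²` and `t₂²` leaves expressions in `s₁, s₂` alone.
-/

variable {K : Type*} [Field K]

def chordSlope (s₁ t₁ s₂ t₂ : K) : K := (t₁ - t₂) / (2 * (s₁ - s₂))

lemma sq_sub_sq_of_weierstrass {g₂ g₃ s₁ t₁ s₂ t₂ : K}
    (h₁ : t₁ ^ 2 = 4 * s₁ ^ 3 - g₂ * s₁ - g₃) (h₂ : t₂ ^ 2 = 4 * s₂ ^ 3 - g₂ * s₂ - g₃) :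
    t₁ ^ 2 - t₂ ^ 2 = (s₁ - s₂) * (4 * (s₁ ^ 2 + s₁ * s₂ + s₂ ^ 2) - g₂) := by
  linear_combination h₁ - h₂

lemma sub_sq_mul_chordSlope_sq_add [NeZero (2 : K)] {s₁ s₂ : K} (t₁ t₂ : K) (hne : s₁ ≠ s₂) :
    (s₁ - s₂) ^ 2 * (chordSlope s₁ t₁ s₂ t₂ ^ 2 + chordSlope s₁ t₁ s₂ (-t₂) ^ 2) =
      (t₁ ^ 2 + t₂ ^ 2) / 2 := by
  have hd : s₁ - s₂ ≠ 0 := sub_ne_zero.mpr hne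
  unfold chordSlope
  field_simp
  ring

lemma sub_mul_chordSlope_mul_of_weierstrass [NeZero (2 : K)] {g₂ g₃ s₁ t₁ s₂ t₂ : K}
    (h₁ : t₁ ^ 2 = 4 * s₁ ^ 3 - g₂ * s₁ - g₃) (h₂ : t₂ ^ 2 = 4 * s₂ ^ 3 - g₂ * s₂ - g₃)
    (hne : s₁ ≠ s₂) :
    4 * (s₁ - s₂) * (chordSlope s₁ t₁ s₂ t₂ * chordSlope s₁ t₁ s₂ (-t₂)) =
      4 * (s₁ ^ 2 + s₁ * s₂ + s₂ ^ 2) - g₂ := by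
  have hd : s₁ - s₂ ≠ 0 := sub_ne_zero.mpr hne
  have hdiff := sq_sub_sq_of_weierstrass h₁ h₂
  unfold chordSlope
  field_simp
  linear_combination 4 * hdiff

/-- The multiplication law of the two-valued coset group on the elliptic curve
`t² = 4s³ − g₂s − g₃` modulo the involution `(s,t) ↦ (s,−t)`: the elementary symmetric
functions of the two product values `z₊, z₋` are expressed algebraically in `(s₁, s₂)`. -/
theorem elliptic_coset_two_valued_law (g₂ g₃ s₁ t₁ s₂ t₂ : ℂ)
    (h₁ : t₁^2 = 4*s₁^3 - g₂*s₁ - g₃)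
    (h₂ : t₂^2 = 4*s₂^3 - g₂*s₂ - g₃)
    (hne : s₁ ≠ s₂)
    (zp zm : ℂ)
    (hzp : zp = -s₁ - s₂ + ((t₁ - t₂)/(2*(s₁ - s₂)))^2)
    (hzm : zm = -s₁ - s₂ + ((t₁ + t₂)/(2*(s₁ - s₂)))^2) :
    2*(s₁ - s₂)^2*(zp + zm) = 4*s₁*s₂*(s₁ + s₂) - g₂*(s₁ + s₂) - 2*g₃ ∧
    (s₁ - s₂)^2*(zp*zm) = (s₁*s₂ + g₂/4)^2 + g₃*(s₁ + s₂) := by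
  set lp := chordSlope s₁ t₁ s₂ t₂
  set lm := chordSlope s₁ t₁ s₂ (-t₂)
  have hzp' : zp = -s₁ - s₂ + lp ^ 2 := hzp
  have hzm' : zm = -s₁ - s₂ + lm ^ 2 := by
    simp only [hzm, lm, chordSlope, sub_neg_eq_add]
  have hsq : (s₁ - s₂) ^ 2 * (lp ^ 2 + lm ^ 2) = (t₁ ^ 2 + t₂ ^ 2) / 2 :=
    sub_sq_mul_chordSlope_sq_add t₁ t₂ hne
  have hmul : 4 * (s₁ - s₂) * (lp * lm) = 4 * (s₁ ^ 2 + s₁ * s₂ + s₂ ^ 2) - g₂ :=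
    sub_mul_chordSlope_mul_of_weierstrass h₁ h₂ hne
  subst hzp' hzm'
  constructor
  · linear_combination 2 * hsq + h₁ + h₂
  · linear_combination (-(s₁ + s₂)) * hsq - (s₁ + s₂) / 2 * (h₁ + h₂) +
      ((s₁ - s₂) * (lp * lm) + (4 * (s₁ ^ 2 + s₁ * s₂ + s₂ ^ 2) - g₂) / 4) / 4 * hmul
end

section
/- Let λ, u, v ∈ ℂ with 1 − λu ≠ 0 and 1 − λv ≠ 0, and let w = u + v − λuv (so that 1 − λw = (1 − λu)(1 − λv) ≠ 0). Define x = −u²/(1 − λu), y = −v²/(1 − λv), z₁ = −w²/(1 − λw), and z₂ = −(u − v)²/((1 − λu)(1 − λv)). Then z₁ + z₂ = 2(x + y) − λ²xy and z₁·z₂ = (x − y)², i.e. z₁ and z₂ are the two roots of Z² − (2(x+y) − λ²xy)Z + (x − y)² = 0. -/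
/-!
Write `a = 1 - λu`, `b = 1 - λv` and `w = u + v - λuv`, so that `1 - λw = ab`. The factorisation
`u²b - v²a = (u - v)w` gives `x - y = -(u - v)w/(ab)`, whence `z₁z₂ = (u - v)²w²/(ab)² = (x - y)²`.
Since `xy = u²v²/(ab)`, the sum identity is, after clearing denominators,
`w² + (u - v)² = 2(u²b + v²a) + λ²u²v²`.
-/

section DeformedP2

variable {K : Type*} [Field K] (lam u v : K)

lemma one_sub_mul_add_sub_mul_mul :
    1 - lam * (u + v - lam * u * v) = (1 - lam * u) * (1 - lam * v) := by
  ring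

variable {lam u v}

lemma neg_sq_div_sub_neg_sq_div (hu : 1 - lam * u ≠ 0) (hv : 1 - lam * v ≠ 0) :
    -u ^ 2 / (1 - lam * u) - -v ^ 2 / (1 - lam * v) =
      -((u - v) * (u + v - lam * u * v)) / ((1 - lam * u) * (1 - lam * v)) := by
  rw [div_sub_div _ _ hu hv]
  congr 1
  ring

lemma neg_sq_div_add_neg_sq_div (hu : 1 - lam * u ≠ 0) (hv : 1 - lam * v ≠ 0) :
    -(u + v - lam * u * v) ^ 2 / ((1 - lam * u) * (1 - lam * v)) +
        -(u - v) ^ 2 / ((1 - lam * u) * (1 - lam * v)) =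
      2 * (-u ^ 2 / (1 - lam * u) + -v ^ 2 / (1 - lam * v)) -
        lam ^ 2 * (-u ^ 2 / (1 - lam * u)) * (-v ^ 2 / (1 - lam * v)) := by
  -- with the denominators as atoms, `field_simp` recognises them as the nonzero `hu`, `hv`
  generalize ha : 1 - lam * u = a at *
  generalize hb : 1 - lam * v = b at *
  field_simp
  rw [← ha, ← hb]
  ring

lemma neg_sq_div_mul_neg_sq_div (hu : 1 - lam * u ≠ 0) (hv : 1 - lam * v ≠ 0) :
    -(u + v - lam * u * v) ^ 2 / ((1 - lam * u) * (1 - lam * v)) *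
        (-(u - v) ^ 2 / ((1 - lam * u) * (1 - lam * v))) =
      (-u ^ 2 / (1 - lam * u) - -v ^ 2 / (1 - lam * v)) ^ 2 := by
  rw [neg_sq_div_sub_neg_sq_div hu hv]
  ring

end DeformedP2

/-- The one-parameter 2-groupoid deformation of the elementary two-valued group `p₂`:
with group law `A(u,v) = u + v − λuv` and involution `I(u) = −u/(1−λu)`, setting
`x = u·I(u)`, `y = v·I(v)`, the two products `z₁ = w·I(w)` (for `w = A(u,v)`) and `z₂`
are the roots of `Z² − (2(x+y) − λ²xy)Z + (x−y)² = 0`. -/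
theorem groupoid_deformation_p2 (lam u v : ℂ)
    (hu : 1 - lam*u ≠ 0) (hv : 1 - lam*v ≠ 0)
    (w : ℂ) (hw : w = u + v - lam*u*v)
    (x y z₁ z₂ : ℂ)
    (hx : x = -u^2/(1 - lam*u))
    (hy : y = -v^2/(1 - lam*v))
    (hz₁ : z₁ = -w^2/(1 - lam*w))
    (hz₂ : z₂ = -(u - v)^2/((1 - lam*u)*(1 - lam*v))) :
    1 - lam*w = (1 - lam*u)*(1 - lam*v) ∧
    z₁ + z₂ = 2*(x + y) - lam^2*x*y ∧
    z₁*z₂ = (x - y)^2 := by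
  subst hw hx hy hz₂
  rw [one_sub_mul_add_sub_mul_mul] at hz₁ ⊢
  subst hz₁
  exact ⟨rfl, neg_sq_div_add_neg_sq_div hu hv, neg_sq_div_mul_neg_sq_div hu hv⟩
end

section
/- Let u₁, u₂, v₁, v₂ ∈ ℂ and set x₁ = u₁², x₂ = u₁u₂, x₃ = u₂², y₁ = v₁², y₂ = v₁v₂, y₃ = v₂², and X₂ = (u₁+v₁)², Y₂ = (u₁−v₁)², X₄ = (u₁+v₁)(u₂+v₂), Y₄ = (u₁−v₁)(u₂−v₂), X₆ = (u₂+v₂)², Y₆ = (u₂−v₂)². Then: X₂ + Y₂ = 2(x₁+y₁) and X₂Y₂ = (x₁−y₁)²; X₄ + Y₄ = 2(x₂+y₂) and X₄Y₄ = (x₁−y₁)(x₃−y₃); X₆ + Y₆ = 2(x₃+y₃) and X₆Y₆ = (x₃−y₃)²; moreover X₂X₆ = X₄² and Y₂Y₆ = Y₄². Hence each of the pairs (X₂,Y₂), (X₄,Y₄), (X₆,Y₆) is the root pair of a quadratic equation whose coefficients are polynomials in (x₁,x₂,x₃,y₁,y₂,y₃), and the quadric constraints select the unique compatible pair of triples,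 giving the elementary two-valued group law on ℂ²/±. -/
/-! Every coordinate of `π(u ± v)` has the form `(a ± b)(c ± d)`, with `(a, c)` a pair of
coordinates of `u` and `(b, d)` the matching pair of `v`. One polarization identity therefore
gives all three sums and one difference-of-squares factorization all three products, while the
quadric relations say only that `π(u + v)` and `π(u - v)` lie on `Q`. -/

section CommRing

variable {R : Type*} [CommRing R]

theorem add_mul_add_add_sub_mul_sub (a b c d : R) :
    (a + b) * (c + d) + (a - b) * (c - d) = 2 * (a * c + b * d) := by
  ring

theorem add_mul_add_mul_sub_mul_sub (a b c d : R) :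
    (a + b) * (c + d) * ((a - b) * (c - d)) = (a ^ 2 - b ^ 2) * (c ^ 2 - d ^ 2) := by
  rw [sq_sub_sq, sq_sub_sq]
  ring

end CommRing

/-- The elementary two-valued group law on `ℂ²/±` transported through the embedding
`π([u]) = (u₁², u₁u₂, u₂²)` onto the quadric `x₁x₃ = x₂²`: each pair `(X₂,Y₂)`,
`(X₄,Y₄)`, `(X₆,Y₆)` has elementary symmetric functions polynomial in the coordinates
`(x₁,x₂,x₃,y₁,y₂,y₃)`, and satisfies the quadric constraints. -/
theorem elementary_two_valued_group_law (u₁ u₂ v₁ v₂ : ℂ)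
    (x₁ x₂ x₃ y₁ y₂ y₃ X₂ Y₂ X₄ Y₄ X₆ Y₆ : ℂ)
    (hx₁ : x₁ = u₁^2) (hx₂ : x₂ = u₁*u₂) (hx₃ : x₃ = u₂^2)
    (hy₁ : y₁ = v₁^2) (hy₂ : y₂ = v₁*v₂) (hy₃ : y₃ = v₂^2)
    (hX₂ : X₂ = (u₁ + v₁)^2) (hY₂ : Y₂ = (u₁ - v₁)^2)
    (hX₄ : X₄ = (u₁ + v₁)*(u₂ + v₂)) (hY₄ : Y₄ = (u₁ - v₁)*(u₂ - v₂))
    (hX₆ : X₆ = (u₂ + v₂)^2) (hY₆ : Y₆ = (u₂ - v₂)^2) :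
    X₂ + Y₂ = 2*(x₁ + y₁) ∧ X₂*Y₂ = (x₁ - y₁)^2 ∧
    X₄ + Y₄ = 2*(x₂ + y₂) ∧ X₄*Y₄ = (x₁ - y₁)*(x₃ - y₃) ∧
    X₆ + Y₆ = 2*(x₃ + y₃) ∧ X₆*Y₆ = (x₃ - y₃)^2 ∧
    X₂*X₆ = X₄^2 ∧ Y₂*Y₆ = Y₄^2 := by
  subst_vars
  exact ⟨by simpa only [← sq] using add_mul_add_add_sub_mul_sub u₁ v₁ u₁ v₁,
    by simpa only [← sq] using add_mul_add_mul_sub_mul_sub u₁ v₁ u₁ v₁,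
    add_mul_add_add_sub_mul_sub u₁ v₁ u₂ v₂,
    add_mul_add_mul_sub_mul_sub u₁ v₁ u₂ v₂,
    by simpa only [← sq] using add_mul_add_add_sub_mul_sub u₂ v₂ u₂ v₂,
    by simpa only [← sq] using add_mul_add_mul_sub_mul_sub u₂ v₂ u₂ v₂,
    (mul_pow _ _ 2).symm, (mul_pow _ _ 2).symm⟩
end

section
/- For all u₁, u₃ ∈ ℂ, setting X̂₂ = −u₁², X̂₄ = 2u₁u₃ + u₁⁴/3, and X̂₆ = (u₃ − u₁³/3)², the quartic relation X̂₄² − 2X̂₂²X̂₄ + 4X̂₂X̂₆ + X̂₂⁴ = 0 holds. Hence the image of the map π_K lies on a quartic surface in ℂ³, the rational limit of the Kummer surface. -/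
/-! The triangular change of variables `X̂₂ = −X₂`, `X̂₄ = 2X₄ + X₂²/3`,
`X̂₆ = X₆ − (2/3)X₂X₄ + X₂³/9` turns the quartic into `4(X₄² − X₂X₆)`, and in the unhatted
coordinates `π_K` is the Veronese map `(u₁, u₃) ↦ (u₁², u₁u₃, u₃²)`, whose image lies on the
quadric cone `X₂X₆ = X₄²`. -/

def kummerQuartic {K : Type*} [Field K] (X₂ X₄ X₆ : K) : K :=
  X₄^2 - 2*X₂^2*X₄ + 4*X₂*X₆ + X₂^4

theorem kummerQuartic_change_of_variables {K : Type*} [Field K] [CharZero K] (X₂ X₄ X₆ : K) :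
    kummerQuartic (-X₂) (2*X₄ + X₂^2/3) (X₆ - 2/3*X₂*X₄ + X₂^3/9) = 4 * (X₄^2 - X₂*X₆) := by
  unfold kummerQuartic
  ring

/-- The image of the map `π_K(u₁,u₃) = ((u₃ − u₁³/3)², 2u₁u₃ + u₁⁴/3, −u₁²)` lies on a
quartic surface in `ℂ³`: the rational limit of the Kummer surface. -/
theorem rational_kummer_quartic (u₁ u₃ : ℂ)
    (X₂ X₄ X₆ : ℂ)
    (hX₂ : X₂ = -u₁^2)
    (hX₄ : X₄ = 2*u₁*u₃ + u₁^4/3)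
    (hX₆ : X₆ = (u₃ - u₁^3/3)^2) :
    X₄^2 - 2*X₂^2*X₄ + 4*X₂*X₆ + X₂^4 = 0 := by
  have hX₄' : X₄ = 2*(u₁*u₃) + (u₁^2)^2/3 := by rw [hX₄]; ring
  have hX₆' : X₆ = u₃^2 - 2/3*u₁^2*(u₁*u₃) + (u₁^2)^3/9 := by rw [hX₆]; ring
  have veronese := kummerQuartic_change_of_variables (u₁^2) (u₁*u₃) (u₃^2)
  rw [← hX₂, ← hX₄', ← hX₆', mul_pow, sub_self, mul_zero] at veronese
  exact veronese
end

section
/- Let u = (u₁,u₃), v = (v₁,v₃) ∈ ℂ² and set x₂ = 2u₁u₃ + u₁⁴/3, x₃ = −u₁², y₂ = 2v₁v₃ + v₁⁴/3, y₃ = −v₁² (the second and third coordinates of π_K(u) and π_K(v)). Define X̂₂ = −(u₁+v₁)², Ŷ₂ = −(u₁−v₁)², X̂₄ = 2(u₁+v₁)(u₃+v₃) + (1/3)(u₁+v₁)⁴, Ŷ₄ = 2(u₁−v₁)(u₃−v₃) + (1/3)(u₁−v₁)⁴. Then X̂₂ + Ŷ₂ = 2(x₃ + y₃), X̂₂·Ŷ₂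 = (x₃ − y₃)², and X̂₄ + Ŷ₄ = 2(x₂ + y₂ + 2x₃y₃). In particular the pair (X̂₂, Ŷ₂) is the root pair of the quadratic Z² − 2(x₃+y₃)Z + (x₃−y₃)² = 0. -/
/-!
Since `x₃ = -u₁²` and `y₃ = -v₁²`, the pair `(X̂₂, Ŷ₂) = (-(u₁ + v₁)², -(u₁ - v₁)²)` is exchanged by
`v ↦ -v`, so its elementary symmetric functions are even in `v₁` and hence polynomial in `x₃, y₃`:
`(a + b)² + (a - b)² = 2(a² + b²)` and `(a + b)(a - b) = a² - b²`. The same parity makes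
`X̂₄ + Ŷ₄` even in `v`, and by Vieta the quadratic with these symmetric functions has roots `X̂₂, Ŷ₂`.
-/

theorem sq_sub_add_mul_add_mul_eq_zero_iff {R : Type*} [CommRing R] [NoZeroDivisors R]
    (a b z : R) : z ^ 2 - (a + b) * z + a * b = 0 ↔ z = a ∨ z = b := by
  rw [show z ^ 2 - (a + b) * z + a * b = (z - a) * (z - b) by ring, mul_eq_zero, sub_eq_zero,
    sub_eq_zero]

/-- The rational Kummer two-valued group: the elementary symmetric functions of the
pairs `(X̂₂, Ŷ₂)` and `(X̂₄, Ŷ₄)`, coming from `π_K(u+v)` and `π_K(u−v)`, are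
polynomial in the coordinates `x₂, x₃, y₂, y₃` of `π_K(u)` and `π_K(v)`. -/
theorem rational_kummer_law (u₁ u₃ v₁ v₃ : ℂ)
    (x₂ x₃ y₂ y₃ X₂ Y₂ X₄ Y₄ : ℂ)
    (hx₂ : x₂ = 2*u₁*u₃ + u₁^4/3) (hx₃ : x₃ = -u₁^2)
    (hy₂ : y₂ = 2*v₁*v₃ + v₁^4/3) (hy₃ : y₃ = -v₁^2)
    (hX₂ : X₂ = -(u₁ + v₁)^2) (hY₂ : Y₂ = -(u₁ - v₁)^2)
    (hX₄ : X₄ = 2*(u₁ + v₁)*(u₃ + v₃) + (1/3)*(u₁ + v₁)^4)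
    (hY₄ : Y₄ = 2*(u₁ - v₁)*(u₃ - v₃) + (1/3)*(u₁ - v₁)^4) :
    X₂ + Y₂ = 2*(x₃ + y₃) ∧ X₂*Y₂ = (x₃ - y₃)^2 ∧
    X₄ + Y₄ = 2*(x₂ + y₂ + 2*x₃*y₃) ∧
    (∀ Z : ℂ, Z^2 - 2*(x₃ + y₃)*Z + (x₃ - y₃)^2 = 0 ↔ (Z = X₂ ∨ Z = Y₂)) := by
  have hsum : X₂ + Y₂ = 2*(x₃ + y₃) := by rw [hX₂, hY₂, hx₃, hy₃]; ring
  have hprod : X₂*Y₂ = (x₃ - y₃)^2 := by rw [hX₂, hY₂, hx₃, hy₃]; ring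
  have hsum₄ : X₄ + Y₄ = 2*(x₂ + y₂ + 2*x₃*y₃) := by
    rw [hX₄, hY₄, hx₂, hy₂, hx₃, hy₃]; ring
  refine ⟨hsum, hprod, hsum₄, fun Z => ?_⟩
  rw [← hsum, ← hprod]
  exact sq_sub_add_mul_add_mul_eq_zero_iff X₂ Y₂ Z
end

section
/- Let q₁, q₂ be quadratic forms on ℂ⁶ with symmetric matrix representatives A, B, and assume the pencil is generic in the sense that the polynomial λ ↦ det(A + λB) has degree 6 and six distinct complex roots, and det A ≠ 0. Then every linear subspace W ⊆ ℂ⁶ on which both q₁ and q₂ vanish identically has dimension at most 2. Equivalently, the maximal linear subspaces of the smooth intersection X of the two quadrics {q₁ = 0} and {q₂ = 0} in ℂP⁵ are one-dimensional (lines). -/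
/-!
Let `φ, ψ` be the bilinear forms of `A, B` and `T = A⁻¹B`, so that `φ (T x) y = ψ x y`. Each root
`t` of `det (A + tB)` makes `-t⁻¹` an eigenvalue of `T`, so `T` has six distinct eigenvalues. Its
eigenvectors form a basis which is `φ`-orthogonal because `T` is `φ`-self-adjoint, so every
eigenvector of `T` is `φ`-anisotropic. A `φ`-isotropic `W` satisfies `W ≤ W^⊥`, hence `dim W ≤ 3`,
and if `dim W = 3` then `W = W^⊥`. As `W` is also `ψ`-isotropic, `T` maps `W` into `W^⊥ = W`, so
`W` contains an eigenvector of `T`, which cannot be `φ`-isotropic.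
-/

open Polynomial Matrix Module
open LinearMap (BilinForm)

namespace Module.End

variable {K V ι : Type*} [Field K] [AddCommGroup V] [Module K V]

theorem exists_basis_apply_eq_smul [FiniteDimensional K V] [Fintype ι] {f : End K V} {μ : ι → K}
    (hμ : Function.Injective μ) (hf : ∀ i, f.HasEigenvalue (μ i))
    (hcard : Fintype.card ι = finrank K V) : ∃ b : Basis ι K V, ∀ i, f (b i) = μ i • b i := by
  choose v hv using fun i => (hf i).exists_hasEigenvector
  refine ⟨basisOfLinearIndependentOfCardEqFinrank' v
    (f.eigenvectors_linearIndependent' μ hμ v hv) hcard, fun i => ?_⟩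
  simpa using (hv i).apply_eq_smul

theorem exists_eq_smul_basis_of_hasEigenvector [Fintype ι] {f : End K V} {b : Basis ι K V}
    {μ : ι → K} (hμ : Function.Injective μ) (hb : ∀ i, f (b i) = μ i • b i) {ν : K} {u : V}
    (hu : f.HasEigenvector ν u) : ∃ i, ∃ c : K, u = c • b i := by
  set c := b.repr u
  have hcoord : ∀ j, c j ≠ 0 → μ j = ν := by
    have h := hu.apply_eq_smul
    rw [← b.sum_repr u, map_sum, Finset.smul_sum] at h
    simp only [map_smul, hb, smul_smul] at h
    have hcoeff : (fun j => c j * μ j) = fun j => ν * c j := by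
      simpa only [b.repr_sum_self] using congrArg (fun x => ⇑(b.repr x)) h
    exact fun j hj => mul_left_cancel₀ hj ((congrFun hcoeff j).trans (mul_comm _ _))
  obtain ⟨i, hi⟩ : ∃ i, c i ≠ 0 := by
    by_contra! h
    exact hu.2 (b.repr.map_eq_zero_iff.mp (Finsupp.ext h))
  have hc : c = Finsupp.single i (c i) := by
    ext j
    by_cases hj : j = i
    · simp [hj]
    · rw [Finsupp.single_eq_of_ne hj]
      by_contra hcj
      exact hj (hμ ((hcoord j hcj).trans (hcoord i hi).symm))
  refine ⟨i, c i, ?_⟩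
  rw [← Basis.repr_symm_single, ← hc, LinearEquiv.symm_apply_apply]

theorem exists_hasEigenvector_mem_of_mapsTo [IsAlgClosed K] [FiniteDimensional K V] (f : End K V)
    {W : Submodule K V} (hW : W ≠ ⊥) (hfW : ∀ x ∈ W, f x ∈ W) :
    ∃ ν, ∃ u ∈ W, f.HasEigenvector ν u := by
  have : Nontrivial W := Submodule.nontrivial_iff_ne_bot.mpr hW
  obtain ⟨ν, hν⟩ := exists_eigenvalue (f.restrict hfW)
  obtain ⟨u, hu⟩ := hν.exists_hasEigenvector
  refine ⟨ν, u, u.2, ⟨mem_eigenspace_iff.mpr ?_, ?_⟩⟩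
  · exact congrArg Subtype.val hu.apply_eq_smul
  · exact fun h => hu.2 (Subtype.ext h)

end Module.End

namespace LinearMap.BilinForm

variable {K V : Type*} [Field K] [AddCommGroup V] [Module K V]

theorem le_orthogonal_of_apply_self_eq_zero [NeZero (2 : K)] {φ : BilinForm K V}
    (hφ : φ.IsSymm) {W : Submodule K V} (hW : ∀ x ∈ W, φ x x = 0) : W ≤ φ.orthogonal W := by
  intro y hy x hx
  have h := hW _ (W.add_mem hx hy)
  simp only [map_add, LinearMap.add_apply, hW x hx, hW y hy, hφ.eq y x] at h
  have h2 : (2 : K) * φ x y = 0 := by linear_combination h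
  exact (mul_eq_zero.mp h2).resolve_left two_ne_zero

variable [FiniteDimensional K V] {φ ψ : BilinForm K V} (hφ : φ.Nondegenerate)
include hφ

theorem two_mul_finrank_le_of_le_orthogonal {W : Submodule K V} (hW : W ≤ φ.orthogonal W) :
    2 * finrank K W ≤ finrank K V := by
  have := Submodule.finrank_mono hW
  rw [finrank_orthogonal hφ] at this
  have := Submodule.finrank_le W
  omega

theorem orthogonal_eq_of_two_mul_finrank_eq {W : Submodule K V} (hW : W ≤ φ.orthogonal W)
    (h : 2 * finrank K W = finrank K V) : φ.orthogonal W = W :=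
  (Submodule.eq_of_le_of_finrank_eq hW (by rw [finrank_orthogonal hφ]; omega)).symm

theorem hasEigenvector_symmCompOfNondegenerate {t : K} {v : V} (hv : v ≠ 0)
    (h : (φ + t • ψ) v = 0) :
    Module.End.HasEigenvector (ψ.symmCompOfNondegenerate φ hφ) (-t⁻¹) v := by
  set T := ψ.symmCompOfNondegenerate φ hφ
  have hvT : v + t • T v = 0 := by
    refine hφ.1 _ fun w => ?_
    rw [map_add, map_smul, LinearMap.add_apply, LinearMap.smul_apply,
      symmCompOfNondegenerate_left_apply]
    simpa using LinearMap.congr_fun h w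
  have ht : t ≠ 0 := by
    rintro rfl
    exact hv (by simpa using hvT)
  refine ⟨Module.End.mem_eigenspace_iff.mpr ?_, hv⟩
  rw [neg_smul, eq_neg_iff_add_eq_zero, add_comm, ← inv_smul_smul₀ ht (T v), ← smul_add, hvT,
    smul_zero]

theorem symmCompOfNondegenerate_mem_orthogonal (hφ' : φ.IsRefl) {W : Submodule K V}
    (hψW : W ≤ ψ.orthogonal W) {x : V} (hx : x ∈ W) :
    ψ.symmCompOfNondegenerate φ hφ x ∈ φ.orthogonal W := fun n hn =>
  hφ' _ _ ((symmCompOfNondegenerate_left_apply ψ hφ n x).trans (hψW hn x hx))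

theorem apply_eq_zero_of_symmCompOfNondegenerate_eq_smul (hφ' : φ.IsSymm) (hψ : ψ.IsSymm)
    {a b : K} (hab : a ≠ b) {x y : V} (hx : ψ.symmCompOfNondegenerate φ hφ x = a • x)
    (hy : ψ.symmCompOfNondegenerate φ hφ y = b • y) : φ x y = 0 := by
  have hxa : ψ x y = a * φ x y := by
    rw [← symmCompOfNondegenerate_left_apply ψ hφ, hx, map_smul, LinearMap.smul_apply,
      smul_eq_mul]
  have hyb : ψ x y = b * φ x y := by
    rw [hψ.eq, ← symmCompOfNondegenerate_left_apply ψ hφ, hy, map_smul, LinearMap.smul_apply,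
      smul_eq_mul, hφ'.eq]
  have h : (a - b) * φ x y = 0 := by linear_combination hxa.symm.trans hyb
  exact (mul_eq_zero.mp h).resolve_left (sub_ne_zero.mpr hab)

section SimpleSpectrum

variable (hφ' : φ.IsSymm) (hψ : ψ.IsSymm) {ι : Type*} [Fintype ι] {μ : ι → K}
  (hμ : Function.Injective μ)
  (hT : ∀ i, Module.End.HasEigenvalue (ψ.symmCompOfNondegenerate φ hφ) (μ i))
  (hcard : Fintype.card ι = finrank K V)
include hφ' hψ hμ hT hcard

theorem apply_self_ne_zero_of_hasEigenvector {ν : K} {u : V}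
    (hu : Module.End.HasEigenvector (ψ.symmCompOfNondegenerate φ hφ) ν u) : φ u u ≠ 0 := by
  obtain ⟨b, hb⟩ := Module.End.exists_basis_apply_eq_smul hμ hT hcard
  have hortho : φ.iIsOrtho b := fun i j hij =>
    apply_eq_zero_of_symmCompOfNondegenerate_eq_smul hφ hφ' hψ (hμ.ne hij) (hb i) (hb j)
  obtain ⟨i, c, rfl⟩ := Module.End.exists_eq_smul_basis_of_hasEigenvector hμ hb hu
  have hc : c ≠ 0 := by
    rintro rfl
    exact hu.2 (zero_smul K _)
  simpa [hc] using hortho.not_isOrtho_basis_self_of_nondegenerate hφ i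

theorem two_mul_finrank_lt_of_le_orthogonal [IsAlgClosed K] [Nontrivial V] {W : Submodule K V}
    (hφW : W ≤ φ.orthogonal W) (hψW : W ≤ ψ.orthogonal W) : 2 * finrank K W < finrank K V := by
  refine (two_mul_finrank_le_of_le_orthogonal hφ hφW).lt_of_ne fun h => ?_
  have hW : W ≠ ⊥ := by
    rintro rfl
    simp only [finrank_bot, mul_zero] at h
    exact finrank_pos.ne h
  have hTW : ∀ x ∈ W, ψ.symmCompOfNondegenerate φ hφ x ∈ W := fun x hx =>
    orthogonal_eq_of_two_mul_finrank_eq hφ hφW h ▸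
      symmCompOfNondegenerate_mem_orthogonal hφ hφ'.isRefl hψW hx
  obtain ⟨ν, u, huW, hu⟩ := Module.End.exists_hasEigenvector_mem_of_mapsTo _ hW hTW
  exact apply_self_ne_zero_of_hasEigenvector hφ hφ' hψ hμ hT hcard hu (hφW huW u huW)

end SimpleSpectrum

end LinearMap.BilinForm

namespace Matrix

variable {n : Type*} [Fintype n] [DecidableEq n]

theorem eval_det_map_C_add_X_smul {R : Type*} [CommRing R] (A B : Matrix n n R) (t : R) :
    (A.map C + (X : R[X]) • B.map C).det.eval t = (A + t • B).det := by
  rw [← coe_evalRingHom, RingHom.map_det]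
  congr 1
  ext i j
  simp only [RingHom.mapMatrix_apply, map_apply, add_apply, smul_apply, smul_eq_mul,
    coe_evalRingHom, eval_add, eval_mul, eval_C, eval_X]

theorem hasEigenvalue_symmCompOfNondegenerate_of_det_add_smul_eq_zero {K : Type*} [Field K]
    {A B : Matrix n n K} (hA : A.det ≠ 0) {t : K} (ht : (A + t • B).det = 0) :
    Module.End.HasEigenvalue (B.toBilin'.symmCompOfNondegenerate A.toBilin'
      (LinearMap.BilinForm.nondegenerate_toBilin'_of_det_ne_zero' A hA)) (-t⁻¹) := by
  obtain ⟨v, hv, hvM⟩ := exists_vecMul_eq_zero_iff.mpr ht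
  refine Module.End.hasEigenvalue_of_hasEigenvector
    (LinearMap.BilinForm.hasEigenvector_symmCompOfNondegenerate _ hv ?_)
  refine LinearMap.ext fun w => ?_
  rw [← map_smul, ← map_add, toBilin'_apply', dotProduct_mulVec, hvM]
  simp

end Matrix

theorem generic_pencil_isotropic_dim_le_two_general
    (A B : Matrix (Fin 6) (Fin 6) ℂ) (hA : A.IsSymm) (hB : B.IsSymm)
    (q₁ q₂ : (Fin 6 → ℂ) → ℂ)
    (hq₁ : ∀ x, q₁ x = x ⬝ᵥ (A *ᵥ x))
    (hq₂ : ∀ x, q₂ x = x ⬝ᵥ (B *ᵥ x))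
    (hroots : (Matrix.det (A.map (C : ℂ → ℂ[X]) + (X : ℂ[X]) • B.map (C : ℂ → ℂ[X]))).roots.toFinset.card = 6)
    (hdetA : A.det ≠ 0) :
    ∀ W : Submodule ℂ (Fin 6 → ℂ),
      (∀ x ∈ W, q₁ x = 0 ∧ q₂ x = 0) → Module.finrank ℂ W ≤ 2 := by
  intro W hW
  set p := (A.map (C : ℂ → ℂ[X]) + (X : ℂ[X]) • B.map (C : ℂ → ℂ[X])).det
  have hφW : W ≤ A.toBilin'.orthogonal W :=
    LinearMap.BilinForm.le_orthogonal_of_apply_self_eq_zero (isSymm_toBilin'_iff_isSymm.mpr hA)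
      fun x hx => by rw [toBilin'_apply', ← hq₁]; exact (hW x hx).1
  have hψW : W ≤ B.toBilin'.orthogonal W :=
    LinearMap.BilinForm.le_orthogonal_of_apply_self_eq_zero (isSymm_toBilin'_iff_isSymm.mpr hB)
      fun x hx => by rw [toBilin'_apply', ← hq₂]; exact (hW x hx).2
  have hroot : ∀ t : p.roots.toFinset, (A + (t : ℂ) • B).det = 0 := fun t => by
    rw [← eval_det_map_C_add_X_smul]
    exact (mem_roots'.mp (Multiset.mem_toFinset.mp t.2)).2
  have hlt := LinearMap.BilinForm.two_mul_finrank_lt_of_le_orthogonal _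
    (isSymm_toBilin'_iff_isSymm.mpr hA) (isSymm_toBilin'_iff_isSymm.mpr hB)
    (neg_injective.comp (inv_injective.comp Subtype.val_injective))
    (fun t => hasEigenvalue_symmCompOfNondegenerate_of_det_add_smul_eq_zero hdetA (hroot t))
    (by simp [hroots]) hφW hψW
  rw [finrank_fin_fun] at hlt
  omega

/-- For a generic pencil of quadrics on `ℂ⁶` (the polynomial `λ ↦ det(A + λB)` has degree
6 with six distinct roots, and `det A ≠ 0`), every common totally isotropic subspace has
dimension at most 2. Equivalently, the maximal linear subspaces of the smooth intersection
of the two quadrics in `ℂP⁵` are lines. -/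
theorem generic_pencil_isotropic_dim_le_two
    (A B : Matrix (Fin 6) (Fin 6) ℂ) (hA : A.IsSymm) (hB : B.IsSymm)
    (q₁ q₂ : (Fin 6 → ℂ) → ℂ)
    (hq₁ : ∀ x, q₁ x = x ⬝ᵥ (A *ᵥ x))
    (hq₂ : ∀ x, q₂ x = x ⬝ᵥ (B *ᵥ x))
    (hdeg : (Matrix.det (A.map (C : ℂ → ℂ[X]) + (X : ℂ[X]) • B.map (C : ℂ → ℂ[X]))).degree = 6)
    (hroots : (Matrix.det (A.map (C : ℂ → ℂ[X]) + (X : ℂ[X]) • B.map (C : ℂ → ℂ[X]))).roots.toFinset.card = 6)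
    (hdetA : A.det ≠ 0) :
    ∀ W : Submodule ℂ (Fin 6 → ℂ),
      (∀ x ∈ W, q₁ x = 0 ∧ q₂ x = 0) → Module.finrank ℂ W ≤ 2 :=
  generic_pencil_isotropic_dim_le_two_general A B hA hB q₁ q₂ hq₁ hq₂ hroots hdetA
end

section
/- Let q₁, q₂ be quadratic forms on ℂ⁶ with symmetric matrix representatives A, B, and assume the pencil is generic in the sense that the polynomial λ ↦ det(A + λB) has degree 6 and six distinct complex roots, and det A ≠ 0. Then for every nonzero vector x ∈ ℂ⁶ with q₁(x) = 0 and q₂(x) = 0 there exists a 2-dimensional linear subspace W ⊆ ℂ⁶ containing x on which both q₁ and q₂ vanish identically. Equivalently, through every point of the smooth intersection X of the two quadrics in ℂP⁵ there passes a line contained in X. -/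
/-!
A line through `x` on both quadrics is spanned by `x` and a common zero `v` of the two forms
that is orthogonal to `x` for both of them. These orthogonality conditions, together with one
linear condition excluding `x`, cut out a space of dimension at least `6 - 3 = 3`, so it
suffices that two conics in a projective plane over an algebraically closed field meet. The
pencil `B₁ + c • B₂` has a degenerate member (a root of the cubic `c ↦ det (B₁ + c • B₂)`), or
else `B₂` is degenerate; a degenerate form vanishes on a plane through a vector of its kernel,
and the other form has a zero on that plane.
-/

open Polynomial Matrix Module

theorem exists_ne_zero_binary_quadratic_eq_zero {K : Type*} [Field K] [IsAlgClosed K]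
    (a b c : K) : ∃ s t : K, (s, t) ≠ 0 ∧ a * s ^ 2 + b * s * t + c * t ^ 2 = 0 := by
  by_cases ha : a = 0
  · exact ⟨1, 0, by simp, by simp [ha]⟩
  obtain ⟨t, ht⟩ := IsAlgClosed.exists_root (C a * X ^ 2 + C b * X + C c)
    (by rw [degree_quadratic ha]; decide)
  exact ⟨t, 1, by simp, by simpa using ht⟩

theorem finrank_span_pair_eq_two {K V : Type*} [Field K] [AddCommGroup V] [Module K V]
    {x y : V} (f : Dual K V) (hx : f x ≠ 0) (hy : f y = 0) (hy0 : y ≠ 0) :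
    finrank K (Submodule.span K {x, y}) = 2 := by
  have hxy : LinearIndependent K ![x, y] := by
    refine LinearIndependent.pair_iff.mpr fun s t hst => ?_
    have hs : s = 0 := by simpa [hx, hy] using congrArg f hst
    subst hs
    exact ⟨rfl, by simpa [hy0] using hst⟩
  rw [← Matrix.range_cons_cons_empty x y ![], finrank_span_eq_card hxy, Fintype.card_fin]

theorem Matrix.exists_det_add_smul_eq_zero_or_det_eq_zero {K n : Type*} [Field K]
    [IsAlgClosed K] [Fintype n] [DecidableEq n] [Nonempty n] (M₁ M₂ : Matrix n n K) :
    (∃ c : K, (M₁ + c • M₂).det = 0) ∨ M₂.det = 0 := by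
  refine or_iff_not_imp_right.mpr fun h₂ => ?_
  set p : K[X] := det ((X : K[X]) • M₂.map C + M₁.map C)
  have hp : p.natDegree = Fintype.card n := le_antisymm (natDegree_det_X_add_C_le _ _)
    (le_natDegree_of_ne_zero (by rwa [coeff_det_X_add_C_card]))
  obtain ⟨c, hc⟩ := IsAlgClosed.exists_root p
    (ne_of_gt (natDegree_pos_iff_degree_pos.mp (hp ▸ Fintype.card_pos)))
  refine ⟨c, ?_⟩
  rw [IsRoot.def, ← coe_evalRingHom, RingHom.map_det] at hc
  convert hc using 2
  ext i j
  simp [add_comm, mul_comm c]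

namespace LinearMap
namespace BilinForm

variable {K V : Type*} [Field K] [AddCommGroup V] [Module K V]

theorem apply_smul_add_smul (B : LinearMap.BilinForm K V) (s t : K) (u v : V) :
    B (s • u + t • v) (s • u + t • v) =
      B u u * s ^ 2 + (B u v + B v u) * s * t + B v v * t ^ 2 := by
  simp only [map_add, map_smul, LinearMap.add_apply, LinearMap.smul_apply, smul_eq_mul]
  ring

theorem apply_self_eq_zero_of_mem_span_pair {B : LinearMap.BilinForm K V} (hB : B.IsSymm)
    {u v w : V} (hu : B u u = 0) (hv : B v v = 0) (huv : B u v = 0)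
    (hw : w ∈ Submodule.span K {u, v}) : B w w = 0 := by
  obtain ⟨s, t, rfl⟩ := Submodule.mem_span_pair.mp hw
  rw [apply_smul_add_smul, hu, hv, huv, ← hB.eq u v, huv]
  simp

theorem exists_isotropic_mem_of_two_le_finrank [IsAlgClosed K] (B : LinearMap.BilinForm K V)
    {W : Submodule K V} (hW : 2 ≤ finrank K W) : ∃ w ∈ W, w ≠ 0 ∧ B w w = 0 := by
  obtain ⟨e, he⟩ := exists_linearIndependent_of_le_finrank hW
  obtain ⟨s, t, hst, hB⟩ := exists_ne_zero_binary_quadratic_eq_zero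
    (B (e 0) (e 0)) (B (e 0) (e 1) + B (e 1) (e 0)) (B (e 1) (e 1))
  refine ⟨s • e 0 + t • e 1, W.add_mem (W.smul_mem s (e 0).2) (W.smul_mem t (e 1).2), ?_,
    by rw [apply_smul_add_smul]; exact hB⟩
  intro h0
  have := Fintype.linearIndependent_iff.mp (he.map' W.subtype W.ker_subtype) ![s, t]
    (by simpa [Fin.sum_univ_two] using h0)
  exact hst (Prod.ext (this 0) (this 1))

theorem exists_not_nondegenerate_add_smul_or_not_nondegenerate [IsAlgClosed K]
    [FiniteDimensional K V] [Nontrivial V] (B₁ B₂ : LinearMap.BilinForm K V) :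
    (∃ c : K, ¬(B₁ + c • B₂).Nondegenerate) ∨ ¬B₂.Nondegenerate := by
  let b := finBasis K V
  have : Nonempty (Fin (finrank K V)) := Fin.pos_iff_nonempty.mp finrank_pos
  simpa only [nondegenerate_iff_det_ne_zero b, map_add, map_smul, not_not] using
    Matrix.exists_det_add_smul_eq_zero_or_det_eq_zero (toMatrix b B₁) (toMatrix b B₂)

variable [IsAlgClosed K] [FiniteDimensional K V] {B₁ B₂ : LinearMap.BilinForm K V}

theorem exists_common_isotropic_of_not_nondegenerate_add_smul (h₁ : B₁.IsSymm)
    (h₂ : B₂.IsSymm) (hV : 3 ≤ finrank K V) {c : K} (hc : ¬(B₁ + c • B₂).Nondegenerate) :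
    ∃ z ≠ 0, B₁ z z = 0 ∧ B₂ z z = 0 := by
  set R := B₁ + c • B₂
  have hR : R.IsSymm := h₁.add (h₂.smul c)
  obtain ⟨r, hr, hr0⟩ : ∃ r, (∀ y, R r y = 0) ∧ r ≠ 0 := by
    simpa [hR.isRefl.nondegenerate_iff_separatingLeft, SeparatingLeft] using hc
  obtain ⟨f, hf⟩ := Projective.exists_dual_ne_zero K hr0
  have hker : 2 ≤ finrank K (ker f) := by
    have := Dual.finrank_ker_add_one_of_ne_zero (f := f) (by rintro rfl; exact hf rfl)
    omega
  obtain ⟨w, hw, hw0, hRw⟩ := R.exists_isotropic_mem_of_two_le_finrank hker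
  obtain ⟨z, hz, hz0, h₂z⟩ := B₂.exists_isotropic_mem_of_two_le_finrank
    (finrank_span_pair_eq_two f hf hw hw0).ge
  refine ⟨z, hz0, ?_, h₂z⟩
  simpa [R, h₂z] using apply_self_eq_zero_of_mem_span_pair hR (hr r) hRw (hr w) hz

theorem exists_common_isotropic_of_three_le_finrank (h₁ : B₁.IsSymm) (h₂ : B₂.IsSymm)
    (hV : 3 ≤ finrank K V) : ∃ z ≠ 0, B₁ z z = 0 ∧ B₂ z z = 0 := by
  have : Nontrivial V := (finrank_pos_iff (R := K)).mp (by omega)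
  rcases exists_not_nondegenerate_add_smul_or_not_nondegenerate B₁ B₂ with ⟨c, hc⟩ | hc
  · exact exists_common_isotropic_of_not_nondegenerate_add_smul h₁ h₂ hV hc
  · obtain ⟨z, hz0, h₂z, h₁z⟩ := exists_common_isotropic_of_not_nondegenerate_add_smul
      h₂ h₁ hV (c := 0) (by simpa using hc)
    exact ⟨z, hz0, h₁z, h₂z⟩

theorem exists_common_isotropic_plane_through (h₁ : B₁.IsSymm) (h₂ : B₂.IsSymm)
    (hV : 6 ≤ finrank K V) {x : V} (hx : x ≠ 0) (h₁x : B₁ x x = 0) (h₂x : B₂ x x = 0) :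
    ∃ W : Submodule K V, x ∈ W ∧ finrank K W = 2 ∧ ∀ y ∈ W, B₁ y y = 0 ∧ B₂ y y = 0 := by
  obtain ⟨f, hf⟩ := Projective.exists_dual_ne_zero K hx
  let L := (B₁ x).prod ((B₂ x).prod f)
  have hL : 3 ≤ finrank K (ker L) := by
    have := L.finrank_range_add_finrank_ker
    have := Submodule.finrank_le (range L)
    rw [finrank_prod, finrank_prod, finrank_self] at this
    omega
  obtain ⟨⟨v, hvL⟩, hv0, h₁v, h₂v⟩ :=
    exists_common_isotropic_of_three_le_finrank (h₁.restrict (ker L)) (h₂.restrict (ker L)) hL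
  obtain ⟨h₁xv, h₂xv, hfv⟩ : B₁ x v = 0 ∧ B₂ x v = 0 ∧ f v = 0 := by simpa [L] using hvL
  refine ⟨Submodule.span K {x, v}, Submodule.subset_span (by simp),
    finrank_span_pair_eq_two f hf hfv (by simpa using hv0), fun y hy => ⟨?_, ?_⟩⟩
  · exact apply_self_eq_zero_of_mem_span_pair h₁ h₁x (by simpa using h₁v) h₁xv hy
  · exact apply_self_eq_zero_of_mem_span_pair h₂ h₂x (by simpa using h₂v) h₂xv hy

end BilinForm
end LinearMap

theorem generic_pencil_line_through_every_point_general
    (A B : Matrix (Fin 6) (Fin 6) ℂ) (hA : A.IsSymm) (hB : B.IsSymm)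
    (q₁ q₂ : (Fin 6 → ℂ) → ℂ)
    (hq₁ : ∀ x, q₁ x = x ⬝ᵥ (A *ᵥ x))
    (hq₂ : ∀ x, q₂ x = x ⬝ᵥ (B *ᵥ x)) :
    ∀ x : Fin 6 → ℂ, x ≠ 0 → q₁ x = 0 → q₂ x = 0 →
      ∃ W : Submodule ℂ (Fin 6 → ℂ), x ∈ W ∧ Module.finrank ℂ W = 2 ∧
        ∀ y ∈ W, q₁ y = 0 ∧ q₂ y = 0 := by
  intro x hx hx₁ hx₂
  simp only [hq₁, hq₂, ← Matrix.toBilin'_apply'] at hx₁ hx₂ ⊢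
  exact LinearMap.BilinForm.exists_common_isotropic_plane_through
    (isSymm_toBilin'_iff_isSymm.mpr hA) (isSymm_toBilin'_iff_isSymm.mpr hB) (by simp) hx hx₁ hx₂

/-- For a generic pencil of quadrics on `ℂ⁶` (the polynomial `λ ↦ det(A + λB)` has degree
6 with six distinct roots, and `det A ≠ 0`), through every nonzero common isotropic vector
there passes a 2-dimensional common totally isotropic subspace. Equivalently, through
every point of the smooth intersection of the two quadrics in `ℂP⁵` there passes a line
contained in it. -/
theorem generic_pencil_line_through_every_point
    (A B : Matrix (Fin 6) (Fin 6) ℂ) (hA : A.IsSymm) (hB : B.IsSymm)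
    (q₁ q₂ : (Fin 6 → ℂ) → ℂ)
    (hq₁ : ∀ x, q₁ x = x ⬝ᵥ (A *ᵥ x))
    (hq₂ : ∀ x, q₂ x = x ⬝ᵥ (B *ᵥ x))
    (hdeg : (Matrix.det (A.map (C : ℂ → ℂ[X]) + (X : ℂ[X]) • B.map (C : ℂ → ℂ[X]))).degree = 6)
    (hroots : (Matrix.det (A.map (C : ℂ → ℂ[X]) + (X : ℂ[X]) • B.map (C : ℂ → ℂ[X]))).roots.toFinset.card = 6)
    (hdetA : A.det ≠ 0) :
    ∀ x : Fin 6 → ℂ, x ≠ 0 → q₁ x = 0 → q₂ x = 0 →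
      ∃ W : Submodule ℂ (Fin 6 → ℂ), x ∈ W ∧ Module.finrank ℂ W = 2 ∧
        ∀ y ∈ W, q₁ y = 0 ∧ q₂ y = 0 :=
  generic_pencil_line_through_every_point_general A B hA hB q₁ q₂ hq₁ hq₂
end
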